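/- Fix an integer k ≥ 0. The family of functions { Q_{kj}^m : 0 ≤ m ≤ k, 0 ≤ j ≤ k }, viewed as elements of the ℂ-vector space of functions ℝ⁴ → ℂ, is linearly independent over ℂ: if complex coefficients c_{m,j} satisfy ∑_{m=0}^{k} ∑_{j=0}^{k} c_{m,j} Q_{kj}^m = 0 as a function on ℝ⁴, then all c_{m,j} = 0. -/

import Mathlib

/-!
Regard `α, β, β̄, ᾱ` as four independent variables. Then `Q_{kj}^m` is a polynomial whose monomials
`α^a β^(m-a) β̄^b ᾱ^(k-m-b)` (with `a + b = j`) each determine `(m, j)`, so different `Q_{kj}^m`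
have disjoint supports, and each of them has a nonzero coefficient. The variables really are
independent as functions on `ℝ⁴`: `(α, β, β̄, ᾱ)` is an invertible complex-linear change of the
real coordinates, and a complex polynomial vanishing on `ℝ⁴` is zero.
-/

/-- The polynomial `Q_{kj}^m : ℝ⁴ → ℂ`, the coefficient of `z₁^j z₂^{k-j}` in
`F_k^m(z₁,z₂) = (αz₁+βz₂)^m (-conj(β)z₁+conj(α)z₂)^{k-m}`, where `α = x+iy`, `β = z+iw`:
the sum over pairs `(a,b)` with `a+b = j`, `a ≤ m`, `b ≤ k-m` of
`C(m,a)·C(k-m,b)·(-1)^b·α^a·β^{m-a}·conj(β)^b·conj(α)^{k-m-b}`. -/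
noncomputable def Qkjm (k m j : ℕ) (p : Fin 4 → ℝ) : ℂ :=
  ∑ ab ∈ (Finset.HasAntidiagonal.antidiagonal j).filter (fun ab => ab.1 ≤ m ∧ ab.2 ≤ k - m),
    (Nat.choose m ab.1 : ℂ) * (Nat.choose (k - m) ab.2 : ℂ) * (-1 : ℂ) ^ ab.2 *
      ((p 0 : ℂ) + (p 1 : ℂ) * Complex.I) ^ ab.1 *
      ((p 2 : ℂ) + (p 3 : ℂ) * Complex.I) ^ (m - ab.1) *
      ((starRingEnd ℂ) ((p 2 : ℂ) + (p 3 : ℂ) * Complex.I)) ^ ab.2 *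
      ((starRingEnd ℂ) ((p 0 : ℂ) + (p 1 : ℂ) * Complex.I)) ^ (k - m - ab.2)

open MvPolynomial Complex

theorem MvPolynomial.eq_zero_of_eval_ofReal {σ : Type*} {P : MvPolynomial σ ℂ}
    (h : ∀ x : σ → ℝ, eval (fun i => (x i : ℂ)) P = 0) : P = 0 := by
  refine funext_set (fun _ => Set.range ofReal)
    (fun _ => Set.infinite_range_of_injective ofReal_injective) fun x hx => ?_
  choose y hy using fun i => hx i trivial
  obtain rfl : (fun i => (y i : ℂ)) = x := _root_.funext hy
  simpa using h y

noncomputable def abCoords (p : Fin 4 → ℝ) : Fin 4 → ℂ :=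
  ![p 0 + p 1 * I, p 2 + p 3 * I, starRingEnd ℂ (p 2 + p 3 * I), starRingEnd ℂ (p 0 + p 1 * I)]

-- `bind₁ abSubst` turns a polynomial in `α, β, β̄, ᾱ` into one in `x, y, z, w`.
noncomputable def abSubst : Fin 4 → MvPolynomial (Fin 4) ℂ :=
  ![X 0 + I • X 1, X 2 + I • X 3, X 2 - I • X 3, X 0 - I • X 1]

noncomputable def abSubstInv : Fin 4 → MvPolynomial (Fin 4) ℂ :=
  ![(2⁻¹ : ℂ) • (X 0 + X 3), (-I / 2) • (X 0 - X 3), (2⁻¹ : ℂ) • (X 1 + X 2),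
    (-I / 2) • (X 1 - X 2)]

theorem eval_abSubst (p : Fin 4 → ℝ) (i : Fin 4) :
    eval (fun i => (p i : ℂ)) (abSubst i) = abCoords p i := by
  fin_cases i <;> simp [abSubst, abCoords, conj_ofReal] <;> ring

theorem bind₁_abSubstInv_abSubst (i : Fin 4) : bind₁ abSubstInv (abSubst i) = X i := by
  fin_cases i <;>
    simp only [abSubst, abSubstInv, Fin.zero_eta, Fin.mk_one, Fin.reduceFinMk, Fin.isValue,
      Matrix.cons_val_zero, Matrix.cons_val_one, Matrix.cons_val, map_add, map_sub, map_smul,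
      bind₁_X_right] <;>
    match_scalars <;> ring_nf <;> norm_num [I_sq]

theorem bind₁_abSubst_injective : Function.Injective (bind₁ abSubst) := by
  refine Function.LeftInverse.injective (g := bind₁ abSubstInv) fun P => ?_
  rw [bind₁_bind₁, _root_.funext bind₁_abSubstInv_abSubst, bind₁_X_left, AlgHom.id_apply]

theorem eq_zero_of_eval_abCoords {P : MvPolynomial (Fin 4) ℂ}
    (h : ∀ p, eval (abCoords p) P = 0) : P = 0 := by
  refine bind₁_abSubst_injective (eq_zero_of_eval_ofReal fun p => ?_)
  rw [eval, eval₂Hom_bind₁]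
  convert h p using 3
  exact congrArg eval (_root_.funext (eval_abSubst p))

noncomputable def abExp (k m a b : ℕ) : Fin 4 →₀ ℕ :=
  Finsupp.equivFunOnFinite.symm ![a, m - a, b, k - m - b]

noncomputable def QkjmPoly (k m j : ℕ) : MvPolynomial (Fin 4) ℂ :=
  ∑ ab ∈ (Finset.HasAntidiagonal.antidiagonal j).filter (fun ab => ab.1 ≤ m ∧ ab.2 ≤ k - m),
    monomial (abExp k m ab.1 ab.2) ((m.choose ab.1 : ℂ) * ((k - m).choose ab.2 : ℂ) * (-1) ^ ab.2)

theorem Qkjm_eq_eval (k m j : ℕ) (p : Fin 4 → ℝ) :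
    Qkjm k m j p = eval (abCoords p) (QkjmPoly k m j) := by
  simp only [Qkjm, QkjmPoly, map_sum, eval_monomial, Finsupp.prod_pow, Fin.prod_univ_four, abExp,
    Finsupp.coe_equivFunOnFinite_symm]
  refine Finset.sum_congr rfl fun ab _ => ?_
  simp only [abCoords, Matrix.cons_val_zero, Matrix.cons_val_one, Matrix.cons_val]
  ring

theorem eq_of_abExp_eq {k m m' a b a' b' : ℕ} (ha : a ≤ m) (ha' : a' ≤ m')
    (h : abExp k m' a' b' = abExp k m a b) : m' = m ∧ a' = a ∧ b' = b := by
  have h' := Finsupp.equivFunOnFinite.symm.injective h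
  have h0 := congrFun h' 0
  have h1 := congrFun h' 1
  have h2 := congrFun h' 2
  simp only [Matrix.cons_val_zero, Matrix.cons_val_one, Matrix.cons_val] at h0 h1 h2
  omega

theorem coeff_abExp_QkjmPoly {k m a b : ℕ} (m' j' : ℕ) (ha : a ≤ m) (hb : b ≤ k - m) :
    coeff (abExp k m a b) (QkjmPoly k m' j') =
      if m' = m ∧ j' = a + b then (m.choose a : ℂ) * ((k - m).choose b : ℂ) * (-1) ^ b else 0 := by
  simp only [QkjmPoly, coeff_sum, coeff_monomial]
  split_ifs with h
  · obtain ⟨rfl, rfl⟩ := h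
    refine (Finset.sum_eq_single_of_mem (a, b) (by simp [ha, hb]) ?_).trans (if_pos rfl)
    rintro ⟨a', b'⟩ hab hne
    simp only [Finset.mem_filter] at hab
    exact if_neg fun he => hne (by obtain ⟨-, rfl, rfl⟩ := eq_of_abExp_eq ha hab.2.1 he; rfl)
  · refine Finset.sum_eq_zero fun ⟨a', b'⟩ hab => if_neg fun he => h ?_
    simp only [Finset.mem_filter, Finset.HasAntidiagonal.mem_antidiagonal] at hab
    obtain ⟨rfl, rfl, rfl⟩ := eq_of_abExp_eq ha hab.2.1 he
    exact ⟨rfl, hab.1.symm⟩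

theorem coeff_abExp_sum_C_mul_QkjmPoly {k m a b : ℕ} (c : ℕ → ℕ → ℂ) (hm : m ≤ k)
    (hj : a + b ≤ k) (ha : a ≤ m) (hb : b ≤ k - m) :
    coeff (abExp k m a b)
        (∑ m' ∈ Finset.range (k + 1), ∑ j' ∈ Finset.range (k + 1), C (c m' j') * QkjmPoly k m' j') =
      c m (a + b) * ((m.choose a : ℂ) * ((k - m).choose b : ℂ) * (-1) ^ b) := by
  simp [coeff_sum, coeff_C_mul, coeff_abExp_QkjmPoly _ _ ha hb, ite_and, hm, hj]

/-- for fixed `k`, the family `{ Q_{kj}^m : 0 ≤ m ≤ k, 0 ≤ j ≤ k }` of functions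
`ℝ⁴ → ℂ` is linearly independent over `ℂ`. -/
theorem stmt_12 (k : ℕ) (c : ℕ → ℕ → ℂ)
    (h : ∀ p : Fin 4 → ℝ,
      ∑ m ∈ Finset.range (k + 1), ∑ j ∈ Finset.range (k + 1), c m j * Qkjm k m j p = 0) :
    ∀ m ≤ k, ∀ j ≤ k, c m j = 0 := by
  intro m hm j hj
  have hpoly : ∑ m ∈ Finset.range (k + 1), ∑ j ∈ Finset.range (k + 1),
      C (c m j) * QkjmPoly k m j = 0 :=
    eq_zero_of_eval_abCoords fun p => by simpa [Qkjm_eq_eval] using h p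
  obtain ⟨a, b, ha, hb, rfl⟩ : ∃ a b, a ≤ m ∧ b ≤ k - m ∧ a + b = j :=
    ⟨j - min j (k - m), min j (k - m), by omega, min_le_right _ _, by omega⟩
  have hcoeff := coeff_abExp_sum_C_mul_QkjmPoly c hm hj ha hb
  rw [hpoly, coeff_zero, eq_comm, mul_eq_zero] at hcoeff
  exact hcoeff.resolve_right (by simp [Nat.choose_eq_zero_iff, ha, hb])
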